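/- arXiv:math/0608311 — 4 statements merged into one kernel-verified Lean document; each statement's English description precedes it below -/
import Mathlib

section
/- Let 𝒱 be a finite collection of (nonempty) integer intervals. Then there is a pairwise disjoint subcollection 𝒱' ⊆ 𝒱 such that the cardinality of the union of 𝒱' is at least half the cardinality of the union of 𝒱. -/
private lemma icc_disj {a b c d : ℤ} (h : b < c) :
    Disjoint (Finset.Icc a b) (Finset.Icc c d) := by
  rw [Finset.disjoint_left]
  intro x hx hx'
  simp only [Finset.mem_Icc] at hx hx'
  omega

private lemma lemC : ∀ n : ℕ, ∀ 𝒱 : Finset (ℤ × ℤ), ∀ t : ℤ, 𝒱.card ≤ n →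
    (∀ p ∈ 𝒱, t < p.2) →
    ∃ D1 D2 : Finset (ℤ × ℤ), D1 ⊆ 𝒱 ∧ D2 ⊆ 𝒱 ∧
      (∀ p ∈ D1, ∀ q ∈ D1, p ≠ q → Disjoint (Finset.Icc p.1 p.2) (Finset.Icc q.1 q.2)) ∧
      (∀ p ∈ D2, ∀ q ∈ D2, p ≠ q → Disjoint (Finset.Icc p.1 p.2) (Finset.Icc q.1 q.2)) ∧
      (∀ x, x ∈ 𝒱.biUnion (fun p => Finset.Icc p.1 p.2) → t < x →
        x ∈ D1.biUnion (fun p => Finset.Icc p.1 p.2) ∨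
        x ∈ D2.biUnion (fun p => Finset.Icc p.1 p.2)) ∧
      (∀ p ∈ D2, t < p.1) := by
  intro n
  induction n with
  | zero =>
    intro 𝒱 t hc _
    have : 𝒱 = ∅ := Finset.card_eq_zero.mp (Nat.le_zero.mp hc)
    subst this
    refine ⟨∅, ∅, ?_, ?_, ?_, ?_, ?_, ?_⟩ <;> simp
  | succ n ih =>
    intro 𝒱 t hc ht
    set U := 𝒱.biUnion (fun p => Finset.Icc p.1 p.2) with hU
    by_cases hS : (U.filter (fun x => t < x)).Nonempty
    swap
    · refine ⟨∅, ∅, by simp, by simp, by simp, by simp, ?_, by simp⟩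
      intro x hx hxt
      exact absurd ⟨x, Finset.mem_filter.mpr ⟨hx, hxt⟩⟩ hS
    set S := U.filter (fun x => t < x) with hSdef
    set m := S.min' hS with hmdef
    have hmS : m ∈ S := Finset.min'_mem _ _
    have hmU : m ∈ U := (Finset.mem_filter.mp hmS).1
    have hmt : t < m := (Finset.mem_filter.mp hmS).2
    have hmin : ∀ x ∈ S, m ≤ x := fun x hx => Finset.min'_le _ _ hx
    -- candidates containing m
    have hC1ne : (𝒱.filter (fun p => p.1 ≤ m ∧ m ≤ p.2)).Nonempty := by
      obtain ⟨J, hJ, hxJ⟩ := Finset.mem_biUnion.mp hmU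
      rw [Finset.mem_Icc] at hxJ
      exact ⟨J, Finset.mem_filter.mpr ⟨hJ, hxJ⟩⟩
    obtain ⟨p₁, hp₁C, hp₁max⟩ :=
      Finset.exists_max_image (𝒱.filter (fun p => p.1 ≤ m ∧ m ≤ p.2)) (fun p => p.2) hC1ne
    have hp₁V : p₁ ∈ 𝒱 := (Finset.mem_filter.mp hp₁C).1
    have hp₁l : p₁.1 ≤ m := (Finset.mem_filter.mp hp₁C).2.1
    have hp₁r : m ≤ p₁.2 := (Finset.mem_filter.mp hp₁C).2.2
    by_cases hS2 : (U.filter (fun x => p₁.2 < x)).Nonempty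
    swap
    · -- everything lies below p₁.2
      refine ⟨{p₁}, ∅, by simpa using hp₁V, by simp, ?_, by simp, ?_, by simp⟩
      · intro p hp q hq hne
        simp only [Finset.mem_singleton] at hp hq
        exact absurd (hp.trans hq.symm) hne
      · intro x hx hxt
        left
        have hxm : m ≤ x := hmin x (Finset.mem_filter.mpr ⟨hx, hxt⟩)
        have hxle : x ≤ p₁.2 := by
          by_contra hgt
          push_neg at hgt
          exact hS2 ⟨x, Finset.mem_filter.mpr ⟨hx, hgt⟩⟩
        exact Finset.mem_biUnion.mpr ⟨p₁, Finset.mem_singleton_self _,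
          Finset.mem_Icc.mpr ⟨le_trans hp₁l hxm, hxle⟩⟩
    set x₀ := (U.filter (fun x => p₁.2 < x)).min' hS2 with hx₀def
    have hx₀S : x₀ ∈ U.filter (fun x => p₁.2 < x) := Finset.min'_mem _ _
    have hx₀U : x₀ ∈ U := (Finset.mem_filter.mp hx₀S).1
    have hx₀d : p₁.2 < x₀ := (Finset.mem_filter.mp hx₀S).2
    have hx₀min : ∀ x ∈ U.filter (fun x => p₁.2 < x), x₀ ≤ x :=
      fun x hx => Finset.min'_le _ _ hx
    have hC2ne : (𝒱.filter (fun p => p.1 ≤ x₀ ∧ x₀ ≤ p.2)).Nonempty := by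
      obtain ⟨J, hJ, hxJ⟩ := Finset.mem_biUnion.mp hx₀U
      rw [Finset.mem_Icc] at hxJ
      exact ⟨J, Finset.mem_filter.mpr ⟨hJ, hxJ⟩⟩
    obtain ⟨p₂, hp₂C, hp₂max⟩ :=
      Finset.exists_max_image (𝒱.filter (fun p => p.1 ≤ x₀ ∧ x₀ ≤ p.2)) (fun p => p.2) hC2ne
    have hp₂V : p₂ ∈ 𝒱 := (Finset.mem_filter.mp hp₂C).1
    have hp₂l : p₂.1 ≤ x₀ := (Finset.mem_filter.mp hp₂C).2.1
    have hp₂r : x₀ ≤ p₂.2 := (Finset.mem_filter.mp hp₂C).2.2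
    -- p₂'s left end is above m
    have hF3 : m < p₂.1 := by
      by_contra hcon
      push_neg at hcon
      have : p₂ ∈ 𝒱.filter (fun p => p.1 ≤ m ∧ m ≤ p.2) :=
        Finset.mem_filter.mpr ⟨hp₂V, hcon, le_trans (le_trans hp₁r (le_of_lt hx₀d)) hp₂r⟩
      have := hp₁max p₂ this
      omega
    set W := 𝒱.filter (fun p => p₂.2 < p.2) with hWdef
    have hF1 : ∀ p ∈ W, x₀ < p.1 := by
      intro p hp
      have hpV : p ∈ 𝒱 := (Finset.mem_filter.mp hp).1
      have hpr : p₂.2 < p.2 := (Finset.mem_filter.mp hp).2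
      by_contra hcon
      push_neg at hcon
      have : p ∈ 𝒱.filter (fun q => q.1 ≤ x₀ ∧ x₀ ≤ q.2) :=
        Finset.mem_filter.mpr ⟨hpV, hcon, le_trans hp₂r (le_of_lt hpr)⟩
      have := hp₂max p this
      omega
    have hWcard : W.card ≤ n := by
      have hsub : W ⊆ 𝒱.erase p₁ := by
        intro p hp
        refine Finset.mem_erase.mpr ⟨?_, (Finset.mem_filter.mp hp).1⟩
        intro hEq
        have := hF1 p hp
        rw [hEq] at this
        omega
      have := Finset.card_le_card hsub
      rw [Finset.card_erase_of_mem hp₁V] at this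
      omega
    obtain ⟨D1', D2', hD1s, hD2s, hd1, hd2, hcov, hg⟩ :=
      ih W p₂.2 hWcard (fun p hp => (Finset.mem_filter.mp hp).2)
    refine ⟨insert p₁ D1', insert p₂ D2', ?_, ?_, ?_, ?_, ?_, ?_⟩
    · exact Finset.insert_subset hp₁V (hD1s.trans (Finset.filter_subset _ _))
    · exact Finset.insert_subset hp₂V (hD2s.trans (Finset.filter_subset _ _))
    · -- D1 disjointness
      intro p hp q hq hne
      rcases Finset.mem_insert.mp hp with hp | hp <;>
        rcases Finset.mem_insert.mp hq with hq | hq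
      · exact absurd (hp.trans hq.symm) hne
      · have : x₀ < q.1 := hF1 q (hD1s hq)
        rw [hp]
        exact icc_disj (by omega)
      · have : x₀ < p.1 := hF1 p (hD1s hp)
        rw [hq]
        exact (icc_disj (a := p₁.1) (by omega)).symm
      · exact hd1 p hp q hq hne
    · -- D2 disjointness
      intro p hp q hq hne
      rcases Finset.mem_insert.mp hp with hp | hp <;>
        rcases Finset.mem_insert.mp hq with hq | hq
      · exact absurd (hp.trans hq.symm) hne
      · have : p₂.2 < q.1 := hg q hq
        rw [hp]
        exact icc_disj (by omega)
      · have : p₂.2 < p.1 := hg p hp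
        rw [hq]
        exact (icc_disj (a := p₂.1) (by omega)).symm
      · exact hd2 p hp q hq hne
    · -- coverage
      intro x hx hxt
      rcases le_or_gt x p₁.2 with h1 | h1
      · left
        have hxm : m ≤ x := hmin x (Finset.mem_filter.mpr ⟨hx, hxt⟩)
        exact Finset.mem_biUnion.mpr ⟨p₁, Finset.mem_insert_self _ _,
          Finset.mem_Icc.mpr ⟨le_trans hp₁l hxm, h1⟩⟩
      · rcases le_or_gt x p₂.2 with h2 | h2
        · right
          have hxx₀ : x₀ ≤ x := hx₀min x (Finset.mem_filter.mpr ⟨hx, h1⟩)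
          exact Finset.mem_biUnion.mpr ⟨p₂, Finset.mem_insert_self _ _,
            Finset.mem_Icc.mpr ⟨le_trans hp₂l hxx₀, h2⟩⟩
        · obtain ⟨J, hJ, hxJ⟩ := Finset.mem_biUnion.mp hx
          have hxJ' := Finset.mem_Icc.mp hxJ
          have hJW : J ∈ W := Finset.mem_filter.mpr ⟨hJ, by omega⟩
          have hxW : x ∈ W.biUnion (fun p => Finset.Icc p.1 p.2) :=
            Finset.mem_biUnion.mpr ⟨J, hJW, hxJ⟩
          rcases hcov x hxW h2 with hc | hc
          · left
            obtain ⟨K, hK, hxK⟩ := Finset.mem_biUnion.mp hc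
            exact Finset.mem_biUnion.mpr ⟨K, Finset.mem_insert_of_mem hK, hxK⟩
          · right
            obtain ⟨K, hK, hxK⟩ := Finset.mem_biUnion.mp hc
            exact Finset.mem_biUnion.mpr ⟨K, Finset.mem_insert_of_mem hK, hxK⟩
    · -- guarantee for D2
      intro p hp
      rcases Finset.mem_insert.mp hp with hp | hp
      · rw [hp]; omega
      · have := hg p hp
        omega

/-- Vitali-type half covering lemma for integer intervals: any finite collection of
integer intervals has a pairwise disjoint subcollection covering at least half of the union. -/
theorem stmt_0 (𝒱 : Finset (ℤ × ℤ)) (h : ∀ p ∈ 𝒱, p.1 ≤ p.2) :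
    ∃ 𝒱' ⊆ 𝒱,
      (∀ p ∈ 𝒱', ∀ q ∈ 𝒱', p ≠ q → Disjoint (Finset.Icc p.1 p.2) (Finset.Icc q.1 q.2)) ∧
      (𝒱.biUnion fun p => Finset.Icc p.1 p.2).card ≤
        2 * (𝒱'.biUnion fun p => Finset.Icc p.1 p.2).card := by
  by_cases h𝒱 : 𝒱.Nonempty
  swap
  · refine ⟨∅, Finset.empty_subset _, by simp, ?_⟩
    rw [Finset.not_nonempty_iff_eq_empty.mp h𝒱]
    simp
  have himg : (𝒱.image Prod.fst).Nonempty := h𝒱.image _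
  set t := (𝒱.image Prod.fst).min' himg - 1 with htdef
  have ht : ∀ p ∈ 𝒱, t < p.2 := by
    intro p hp
    have h1 : (𝒱.image Prod.fst).min' himg ≤ p.1 :=
      Finset.min'_le _ _ (Finset.mem_image_of_mem _ hp)
    have := h p hp
    omega
  obtain ⟨D1, D2, hD1s, hD2s, hd1, hd2, hcov, _⟩ := lemC 𝒱.card 𝒱 t le_rfl ht
  have hcov' : (𝒱.biUnion fun p => Finset.Icc p.1 p.2) ⊆
      (D1.biUnion fun p => Finset.Icc p.1 p.2) ∪ (D2.biUnion fun p => Finset.Icc p.1 p.2) := by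
    intro x hx
    have hxt : t < x := by
      obtain ⟨J, hJ, hxJ⟩ := Finset.mem_biUnion.mp hx
      have h1 : (𝒱.image Prod.fst).min' himg ≤ J.1 :=
        Finset.min'_le _ _ (Finset.mem_image_of_mem _ hJ)
      have := Finset.mem_Icc.mp hxJ
      omega
    rcases hcov x hx hxt with hc | hc
    · exact Finset.mem_union_left _ hc
    · exact Finset.mem_union_right _ hc
  have hcard : (𝒱.biUnion fun p => Finset.Icc p.1 p.2).card ≤
      (D1.biUnion fun p => Finset.Icc p.1 p.2).card +
      (D2.biUnion fun p => Finset.Icc p.1 p.2).card :=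
    le_trans (Finset.card_le_card hcov') (Finset.card_union_le _ _)
  rcases le_total (D2.biUnion fun p => Finset.Icc p.1 p.2).card
      (D1.biUnion fun p => Finset.Icc p.1 p.2).card with hle | hle
  · exact ⟨D1, hD1s, hd1, by omega⟩
  · exact ⟨D2, hD2s, hd2, by omega⟩
end

section
/- Let (X_{m,n})_{1≤m≤n} be a real array that is subadditive, i.e., X_{k,n} ≤ X_{k,m} + X_{m+1,n} whenever k ≤ m < n, and suppose X_{j,j} ≤ M for all j. Let n ≥ 1, let s < t be reals with s < M, and let δ = (t−s)/(M−s). If V_1, …, V_r are disjoint subintervals of [1;n] with (1/|V_i|)·X_{V_i} < s for each i and |[1;n] \ ⋃V_i| ≤ δn, then (1/n)·X_{1,n} ≤ (1−δ)s + δM; in particular (1/n)·X_{1,n} ≤ t. -/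
open Finset in
theorem stmt_5_aux (M : ℝ) (X : ℕ → ℕ → ℝ)
    (hsub : ∀ k m n : ℕ, 1 ≤ k → k ≤ m → m < n → X k n ≤ X k m + X (m + 1) n)
    (hdiag : ∀ j : ℕ, 1 ≤ j → X j j ≤ M)
    (r : ℕ) (V : Fin r → ℕ × ℕ)
    (hV : ∀ i, 1 ≤ (V i).1 ∧ (V i).1 ≤ (V i).2)
    (hdisj : ∀ i j, i ≠ j →
      Disjoint (Finset.Icc (V i).1 (V i).2) (Finset.Icc (V j).1 (V j).2)) :
    ∀ m : ℕ, 1 ≤ m →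
      X 1 m ≤ (∑ i ∈ univ.filter (fun i => (V i).2 ≤ m), X (V i).1 (V i).2)
        + M * ((Icc 1 m \ (univ.filter (fun i => (V i).2 ≤ m)).biUnion
            (fun i => Icc (V i).1 (V i).2)).card : ℝ) := by
  intro m
  induction m using Nat.strong_induction_on with
  | _ m IH =>
  intro hm
  by_cases hex : ∃ i, (V i).2 = m
  · obtain ⟨i, hbi⟩ := hex
    have ha1 := (hV i).1
    have hab := (hV i).2
    have hkey : ∀ j, (V j).2 ≤ m → j ≠ i → (V j).2 < (V i).1 := by
      intro j hj hji
      by_contra hcon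
      push_neg at hcon
      have hd := hdisj i j (Ne.symm hji)
      rw [Finset.disjoint_left] at hd
      exact hd (Finset.mem_Icc.mpr ⟨hcon, by omega⟩)
        (Finset.mem_Icc.mpr ⟨(hV j).2, le_refl _⟩)
    by_cases ha : (V i).1 = 1
    · have hfilt : univ.filter (fun j => (V j).2 ≤ m) = {i} := by
        apply Finset.ext
        intro j
        simp only [Finset.mem_filter, Finset.mem_univ, true_and, Finset.mem_singleton]
        constructor
        · intro hj
          by_contra hji
          have h1 := (hV j).1
          have h2 := (hV j).2
          have := hkey j hj hji
          omega
        · rintro rfl; omega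
      rw [hfilt]
      have hsdiff : Icc 1 m \ ({i} : Finset (Fin r)).biUnion (fun j => Icc (V j).1 (V j).2) = ∅ := by
        apply Finset.sdiff_eq_empty_iff_subset.mpr
        intro x hx
        simp only [Finset.mem_biUnion, Finset.mem_singleton]
        exact ⟨i, rfl, by simp only [Finset.mem_Icc] at hx ⊢; omega⟩
      rw [hsdiff]
      simp only [Finset.sum_singleton, Finset.card_empty, Nat.cast_zero, mul_zero, add_zero]
      rw [ha, hbi]
    · have ha2 : 2 ≤ (V i).1 := by omega
      set a := (V i).1 with hadef
      have hstep : X 1 m ≤ X 1 (a - 1) + X a m := by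
        have := hsub 1 (a - 1) m (le_refl 1) (by omega) (by omega)
        have h1 : a - 1 + 1 = a := by omega
        rwa [h1] at this
      have hIH := IH (a - 1) (by omega) (by omega)
      have hfilt : univ.filter (fun j => (V j).2 ≤ m)
          = insert i (univ.filter (fun j => (V j).2 ≤ a - 1)) := by
        apply Finset.ext
        intro j
        simp only [Finset.mem_filter, Finset.mem_univ, true_and, Finset.mem_insert]
        constructor
        · intro hj
          by_cases hji : j = i
          · exact Or.inl hji
          · right; have := hkey j hj hji; omega
        · rintro (rfl | hj)
          · omega
          · omega
      have hinot : i ∉ univ.filter (fun j => (V j).2 ≤ a - 1) := by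
        simp only [Finset.mem_filter, Finset.mem_univ, true_and]
        omega
      have hsum : (∑ j ∈ univ.filter (fun j => (V j).2 ≤ m), X (V j).1 (V j).2)
          = X a m + ∑ j ∈ univ.filter (fun j => (V j).2 ≤ a - 1), X (V j).1 (V j).2 := by
        rw [hfilt, Finset.sum_insert hinot, hbi]
      have hsdiff : Icc 1 m \ (univ.filter (fun j => (V j).2 ≤ m)).biUnion (fun j => Icc (V j).1 (V j).2)
          = Icc 1 (a - 1) \ (univ.filter (fun j => (V j).2 ≤ a - 1)).biUnion (fun j => Icc (V j).1 (V j).2) := by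
        apply Finset.ext
        intro x
        simp only [Finset.mem_sdiff, Finset.mem_Icc, Finset.mem_biUnion, Finset.mem_filter,
          Finset.mem_univ, true_and, not_exists, not_and]
        constructor
        · rintro ⟨⟨h1x, hxm⟩, hnot⟩
          have hxa := hnot i (by omega)
          rw [hbi] at hxa
          constructor
          · constructor
            · exact h1x
            · by_contra hc; push_neg at hc
              exact absurd (by omega : x ≤ m) (by intro _; exact (hxa (by omega)) (by omega))
          · intro j hj
            exact hnot j (by omega)
        · rintro ⟨⟨h1x, hxa⟩, hnot⟩
          refine ⟨⟨h1x, by omega⟩, ?_⟩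
          intro j hj
          by_cases hji : j = i
          · subst hji; intro h; omega
          · exact hnot j (by have := hkey j hj hji; omega)
      rw [hsum, hsdiff]
      linarith [hstep, hIH]
  · push_neg at hex
    by_cases hm1 : m = 1
    · subst hm1
      have hfilt : univ.filter (fun j => (V j).2 ≤ 1) = ∅ := by
        apply Finset.eq_empty_of_forall_notMem
        intro j
        simp only [Finset.mem_filter, Finset.mem_univ, true_and]
        have h1 := (hV j).1
        have h2 := (hV j).2
        have := hex j
        omega
      rw [hfilt]
      simp only [Finset.sum_empty, Finset.biUnion_empty, Finset.sdiff_empty,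
        Nat.card_Icc, zero_add]
      norm_num
      exact hdiag 1 le_rfl
    · have hm2 : 2 ≤ m := by omega
      have hstep : X 1 m ≤ X 1 (m - 1) + X m m := by
        have := hsub 1 (m - 1) m (le_refl 1) (by omega) (by omega)
        have h1 : m - 1 + 1 = m := by omega
        rwa [h1] at this
      have hIH := IH (m - 1) (by omega) (by omega)
      have hfilt : univ.filter (fun j => (V j).2 ≤ m)
          = univ.filter (fun j => (V j).2 ≤ m - 1) := by
        apply Finset.ext
        intro j
        simp only [Finset.mem_filter, Finset.mem_univ, true_and]
        have := hex j
        omega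
      have hmnot : m ∉ (univ.filter (fun j => (V j).2 ≤ m - 1)).biUnion
          (fun j => Icc (V j).1 (V j).2) := by
        simp only [Finset.mem_biUnion, Finset.mem_filter, Finset.mem_univ, true_and,
          Finset.mem_Icc, not_exists, not_and]
        intro j hj
        omega
      have hsdiff : Icc 1 m \ (univ.filter (fun j => (V j).2 ≤ m - 1)).biUnion (fun j => Icc (V j).1 (V j).2)
          = insert m (Icc 1 (m - 1) \ (univ.filter (fun j => (V j).2 ≤ m - 1)).biUnion (fun j => Icc (V j).1 (V j).2)) := by
        have hicc : Icc 1 m = insert m (Icc 1 (m - 1)) := by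
          apply Finset.ext; intro x
          simp only [Finset.mem_insert, Finset.mem_Icc]
          omega
        rw [hicc, Finset.insert_sdiff_of_notMem _ hmnot]
      have hcard : ((Icc 1 m \ (univ.filter (fun j => (V j).2 ≤ m - 1)).biUnion (fun j => Icc (V j).1 (V j).2)).card : ℝ)
          = ((Icc 1 (m - 1) \ (univ.filter (fun j => (V j).2 ≤ m - 1)).biUnion (fun j => Icc (V j).1 (V j).2)).card : ℝ) + 1 := by
        rw [hsdiff, Finset.card_insert_of_notMem (by
          simp only [Finset.mem_sdiff, Finset.mem_Icc]
          intro h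
          omega)]
        push_cast; ring
      rw [hfilt, hcard]
      have hXmm := hdiag m (by omega)
      linarith [hstep, hIH]

/-- For a subadditive array with diagonal bounded by M: if disjoint subintervals of [1;n]
with averages < s δ-fill [1;n] with δ = (t-s)/(M-s), then X_{1,n}/n ≤ (1-δ)s + δM = t. -/
theorem stmt_5 (M s t : ℝ) (X : ℕ → ℕ → ℝ)
    (hsub : ∀ k m n : ℕ, 1 ≤ k → k ≤ m → m < n → X k n ≤ X k m + X (m + 1) n)
    (hdiag : ∀ j : ℕ, 1 ≤ j → X j j ≤ M)
    (n : ℕ) (hn : 1 ≤ n) (hst : s < t) (hsM : s < M)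
    (r : ℕ) (V : Fin r → ℕ × ℕ)
    (hV : ∀ i, 1 ≤ (V i).1 ∧ (V i).1 ≤ (V i).2 ∧ (V i).2 ≤ n)
    (hdisj : ∀ i j, i ≠ j →
      Disjoint (Finset.Icc (V i).1 (V i).2) (Finset.Icc (V j).1 (V j).2))
    (havg : ∀ i, X (V i).1 (V i).2 / (((V i).2 : ℝ) - ((V i).1 : ℝ) + 1) < s)
    (hfill : (((Finset.Icc 1 n) \
        (Finset.univ.biUnion fun i : Fin r => Finset.Icc (V i).1 (V i).2)).card : ℝ)
        ≤ (t - s) / (M - s) * n) :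
    X 1 n / n ≤ (1 - (t - s) / (M - s)) * s + (t - s) / (M - s) * M ∧
      X 1 n / n ≤ t := by
  have hMs : (0:ℝ) < M - s := by linarith
  have heq : (1 - (t - s) / (M - s)) * s + (t - s) / (M - s) * M = t := by
    field_simp
    ring
  rw [heq, and_self]
  have haux := stmt_5_aux M X hsub hdiag r V (fun i => ⟨(hV i).1, (hV i).2.1⟩) hdisj n hn
  have hfilt : Finset.univ.filter (fun i : Fin r => (V i).2 ≤ n) = Finset.univ := by
    apply Finset.ext; intro j
    simp only [Finset.mem_filter, Finset.mem_univ, true_and, iff_true]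
    exact (hV j).2.2
  rw [hfilt] at haux
  set U := Finset.univ.biUnion (fun i : Fin r => Finset.Icc (V i).1 (V i).2) with hU
  -- length facts
  have hlen : ∀ i, (((Finset.Icc (V i).1 (V i).2).card : ℝ)) = ((V i).2 : ℝ) - (V i).1 + 1 := by
    intro i
    rw [Nat.card_Icc, Nat.cast_sub (by have := (hV i).2.1; omega)]
    push_cast; ring
  have hlenpos : ∀ i, (0:ℝ) < ((V i).2 : ℝ) - (V i).1 + 1 := by
    intro i
    have := (hV i).2.1
    have : ((V i).1 : ℝ) ≤ (V i).2 := by exact_mod_cast this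
    linarith
  have hXi : ∀ i, X (V i).1 (V i).2 ≤ s * (((V i).2 : ℝ) - (V i).1 + 1) := by
    intro i
    have := havg i
    rw [div_lt_iff₀ (hlenpos i)] at this
    linarith
  have hsum : (∑ i : Fin r, X (V i).1 (V i).2) ≤ s * (U.card : ℝ) := by
    have hc : (U.card : ℝ) = ∑ i : Fin r, (((Finset.Icc (V i).1 (V i).2).card : ℝ)) := by
      rw [hU, Finset.card_biUnion (fun i _ j _ hij => hdisj i j hij)]
      push_cast; rfl
    rw [hc, Finset.mul_sum]
    apply Finset.sum_le_sum
    intro i _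
    rw [hlen i]
    exact hXi i
  have hUsub : U ⊆ Finset.Icc 1 n := by
    intro x hx
    rw [hU, Finset.mem_biUnion] at hx
    obtain ⟨i, _, hxi⟩ := hx
    rw [Finset.mem_Icc] at hxi ⊢
    have h1 := (hV i).1
    have h2 := (hV i).2
    omega
  have hcards : U.card + (Finset.Icc 1 n \ U).card = n := by
    rw [Finset.card_sdiff_of_subset hUsub, Nat.card_Icc]
    have := Finset.card_le_card hUsub
    rw [Nat.card_Icc] at this
    omega
  set u := (Finset.Icc 1 n \ U).card with hu
  have hcr : (U.card : ℝ) = (n : ℝ) - u := by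
    have : (U.card : ℝ) + u = n := by exact_mod_cast hcards
    linarith
  have hbound : X 1 n ≤ s * ((n:ℝ) - u) + M * u := by
    calc X 1 n ≤ (∑ i : Fin r, X (V i).1 (V i).2) + M * (u : ℝ) := haux
      _ ≤ s * (U.card : ℝ) + M * u := by linarith [hsum]
      _ = s * ((n:ℝ) - u) + M * u := by rw [hcr]
  have hMu : (M - s) * (u : ℝ) ≤ (t - s) * n := by
    have h1 : (M - s) * (u : ℝ) ≤ (M - s) * ((t - s) / (M - s) * n) :=
      mul_le_mul_of_nonneg_left hfill (le_of_lt hMs)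
    have h2 : (M - s) * ((t - s) / (M - s) * n) = (t - s) * n := by
      field_simp
    linarith
  have hnpos : (0:ℝ) < n := by exact_mod_cast hn
  rw [div_le_iff₀ hnpos]
  nlinarith [hbound, hMu]
end

section
/- Let 0 < ε < 1. Suppose 𝒰 = {U_i(1), U_i(2) : i ∈ I} is a tower of height 2 over a finite set I ⊆ ℕ (so i is the left endpoint of U_i(k) and U_i(1) ⊊ U_i(2)), satisfying |U_i(2)| ≥ (2/ε²)|U_i(1)| for all i. Let 𝒱 be the ε-crust of 𝒰, i.e., the set of V ∈ 𝒰(2) whose ε-blowup is maximal: if V^ε ⊊ W^ε for some W ∈ 𝒰 then V = W. Then for each U ∈ 𝒰(1) and V ∈ 𝒱, if U ∩ V ≠ ∅ then U ⊆ V^ε. -/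
/-- The ε-blowup of the integer interval [a;b]: all integers within ε|U| of it. -/
def blowup (ε : ℝ) (a b : ℤ) : Set ℤ :=
  {m : ℤ | (a : ℝ) - ε * ((b : ℝ) - a + 1) ≤ (m : ℝ) ∧
    (m : ℝ) ≤ (b : ℝ) + ε * ((b : ℝ) - a + 1)}

/-- `j` (with top interval [j; u2 j]) lies in the ε-crust of the height-2 tower
over I with levels [i; u1 i] ⊊ [i; u2 i]: its ε-blowup is maximal w.r.t. strict inclusion. -/
def IsCrust (ε : ℝ) (I : Finset ℤ) (u1 u2 : ℤ → ℤ) (j : ℤ) : Prop :=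
  j ∈ I ∧ ∀ i ∈ I,
    (blowup ε j (u2 j) ⊂ blowup ε i (u1 i) → Set.Icc j (u2 j) = Set.Icc i (u1 i)) ∧
    (blowup ε j (u2 j) ⊂ blowup ε i (u2 i) → Set.Icc j (u2 j) = Set.Icc i (u2 i))

/-- Crust lemma, part 1: any first-level interval meeting a crust element is contained
in its ε-blowup. -/
theorem stmt_10 (ε : ℝ) (hε0 : 0 < ε) (hε1 : ε < 1)
    (I : Finset ℤ) (hI : ∀ i ∈ I, 0 ≤ i)
    (u1 u2 : ℤ → ℤ)
    (h1 : ∀ i ∈ I, i ≤ u1 i) (h2 : ∀ i ∈ I, u1 i < u2 i)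
    (hgrow : ∀ i ∈ I, 2 / ε ^ 2 * ((u1 i : ℝ) - i + 1) ≤ (u2 i : ℝ) - i + 1) :
    ∀ i ∈ I, ∀ j ∈ I, IsCrust ε I u1 u2 j →
      (Set.Icc i (u1 i) ∩ Set.Icc j (u2 j)).Nonempty →
      Set.Icc i (u1 i) ⊆ blowup ε j (u2 j) := by
  intro i hi j hj hcrust hne m hm
  obtain ⟨x, hxU, hxV⟩ := hne
  simp only [Set.mem_Icc] at hxU hxV hm
  have hij1 : i ≤ u1 i := h1 i hi
  have hij2 : u1 i < u2 i := h2 i hi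
  have hj1 : j ≤ u1 j := h1 j hj
  have hj2 : u1 j < u2 j := h2 j hj
  have riu1 : (i:ℝ) ≤ u1 i := by exact_mod_cast hij1
  have ru12 : (u1 i:ℝ) < u2 i := by exact_mod_cast hij2
  have rju1 : (j:ℝ) ≤ u1 j := by exact_mod_cast hj1
  have rju2 : (u1 j:ℝ) < u2 j := by exact_mod_cast hj2
  have rix : (i:ℝ) ≤ x := by exact_mod_cast hxU.1
  have rxu1 : (x:ℝ) ≤ u1 i := by exact_mod_cast hxU.2
  have rjx : (j:ℝ) ≤ x := by exact_mod_cast hxV.1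
  have rxu2 : (x:ℝ) ≤ u2 j := by exact_mod_cast hxV.2
  have rim : (i:ℝ) ≤ m := by exact_mod_cast hm.1
  have rmu1 : (m:ℝ) ≤ u1 i := by exact_mod_cast hm.2
  have key : ε * ((u2 i:ℝ) - i + 1) < (1 + ε) * ((u2 j:ℝ) - j + 1) := by
    by_contra hcon
    push_neg at hcon
    have hsub : blowup ε j (u2 j) ⊆ blowup ε i (u2 i) := by
      intro y hy
      simp only [blowup, Set.mem_setOf_eq] at hy ⊢
      constructor
      · nlinarith [hy.1, hε0.le]
      · nlinarith [hy.2, hε0.le]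
    have hnotsub : ¬ blowup ε i (u2 i) ⊆ blowup ε j (u2 j) := by
      intro hback
      have hge : (i:ℝ) - ε * ((u2 i:ℝ) - i + 1) ≤ ⌈(i:ℝ) - ε * ((u2 i:ℝ) - i + 1)⌉ :=
        Int.le_ceil _
      have hlt : (⌈(i:ℝ) - ε * ((u2 i:ℝ) - i + 1)⌉ : ℝ) < (i:ℝ) - ε * ((u2 i:ℝ) - i + 1) + 1 :=
        Int.ceil_lt_add_one _
      have hmemW : ⌈(i:ℝ) - ε * ((u2 i:ℝ) - i + 1)⌉ ∈ blowup ε i (u2 i) := by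
        refine ⟨hge, ?_⟩
        nlinarith [hε0.le]
      have hc := (hback hmemW).1
      nlinarith [hε0.le]
    have heq := (hcrust.2 i hi).2 ⟨hsub, hnotsub⟩
    have hjmem : j ∈ Set.Icc i (u2 i) := heq ▸ Set.mem_Icc.mpr ⟨le_refl j, hj1.trans hj2.le⟩
    have himem : i ∈ Set.Icc j (u2 j) := heq.symm ▸ Set.mem_Icc.mpr ⟨le_refl i, hij1.trans hij2.le⟩
    have hji : j = i := le_antisymm (Set.mem_Icc.mp himem).1 (Set.mem_Icc.mp hjmem).1
    have hu2mem : u2 j ∈ Set.Icc i (u2 i) := heq ▸ Set.mem_Icc.mpr ⟨hj1.trans hj2.le, le_refl _⟩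
    have hu2mem' : u2 i ∈ Set.Icc j (u2 j) := heq.symm ▸ Set.mem_Icc.mpr ⟨hij1.trans hij2.le, le_refl _⟩
    have hu2 : u2 j = u2 i := le_antisymm (Set.mem_Icc.mp hu2mem).2 (Set.mem_Icc.mp hu2mem').2
    rw [hu2, hji] at hcon
    linarith
  have hεgrow := hgrow i hi
  have ha : 2 * ((u1 i:ℝ) - i + 1) ≤ ε ^ 2 * ((u2 i:ℝ) - i + 1) := by
    have hε2 : (0:ℝ) < ε ^ 2 := pow_pos hε0 2
    have h := mul_le_mul_of_nonneg_left hεgrow hε2.le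
    have he : ε ^ 2 * (2 / ε ^ 2 * ((u1 i:ℝ) - i + 1)) = 2 * ((u1 i:ℝ) - i + 1) := by
      field_simp
    linarith [he ▸ h]
  have hULV : (u1 i:ℝ) - i + 1 ≤ ε * ((u2 j:ℝ) - j + 1) := by
    have hb := mul_lt_mul_of_pos_left key hε0
    nlinarith [hb, ha, mul_nonneg (mul_nonneg hε0.le (by linarith : (0:ℝ) ≤ 1 - ε))
      (by linarith : (0:ℝ) ≤ (u2 j:ℝ) - j + 1)]
  simp only [blowup, Set.mem_setOf_eq]
  constructor
  · linarith
  · linarith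
end

section
/- Let M > 0 and let (X_{m,n})_{1≤m≤n} be a subadditive array (X_{k,n} ≤ X_{k,m} + X_{m+1,n} for k ≤ m < n) with X_{j,j} ≤ M for all j. Set S_n = X_{1,n}/n. If s < t < M and S_n > t for some n, then [1;n] cannot be δ-filled by disjoint intervals V_1,…,V_r with X_{V_i}/|V_i| < s, where δ = (t−s)/(M−s). -/
/-- For a subadditive array with diagonal ≤ M and s < t < M: if X_{1,n}/n > t then
[1;n] cannot be δ-filled (δ = (t-s)/(M-s)) by disjoint intervals with averages < s. -/
theorem stmt_17 (M s t : ℝ) (X : ℕ → ℕ → ℝ)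
    (hsub : ∀ k m n : ℕ, 1 ≤ k → k ≤ m → m < n → X k n ≤ X k m + X (m + 1) n)
    (hdiag : ∀ j : ℕ, 1 ≤ j → X j j ≤ M)
    (hst : s < t) (htM : t < M)
    (n : ℕ) (hn : 1 ≤ n) (hS : t < X 1 n / n) :
    ¬ ∃ (r : ℕ) (V : Fin r → ℕ × ℕ),
        (∀ i, 1 ≤ (V i).1 ∧ (V i).1 ≤ (V i).2 ∧ (V i).2 ≤ n) ∧
        (∀ i j, i ≠ j →
          Disjoint (Finset.Icc (V i).1 (V i).2) (Finset.Icc (V j).1 (V j).2)) ∧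
        (∀ i, X (V i).1 (V i).2 / (((V i).2 : ℝ) - ((V i).1 : ℝ) + 1) < s) ∧
        (((Finset.Icc 1 n) \
            (Finset.univ.biUnion fun i : Fin r => Finset.Icc (V i).1 (V i).2)).card : ℝ)
          ≤ (t - s) / (M - s) * n := by
  rintro ⟨r, V, hV1, hdisj, havg, hcard⟩
  set B := Finset.univ.biUnion fun i : Fin r => Finset.Icc (V i).1 (V i).2 with hBdef
  set U := Finset.Icc 1 n \ B with hUdef
  have hmemB : ∀ a : ℕ, a ∈ B ↔ ∃ i : Fin r, (V i).1 ≤ a ∧ a ≤ (V i).2 := by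
    intro a
    simp [hBdef, Finset.mem_biUnion, Finset.mem_Icc]
  have hmemU : ∀ a : ℕ, a ∈ U ↔ (1 ≤ a ∧ a ≤ n) ∧ a ∉ B := by
    intro a
    simp [hUdef, Finset.mem_sdiff, Finset.mem_Icc]
  have hXle : ∀ i : Fin r, X (V i).1 (V i).2 ≤ s * (((V i).2 : ℝ) - (V i).1 + 1) := by
    intro i
    have h1 := (hV1 i).2.1
    have hpos : (0:ℝ) < ((V i).2 : ℝ) - (V i).1 + 1 := by
      have : ((V i).1 : ℝ) ≤ (V i).2 := by exact_mod_cast h1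
      linarith
    have h := havg i
    rw [div_lt_iff₀ hpos] at h
    linarith
  -- terminal covered case: a is left endpoint of an interval ending at n
  have covTerm : ∀ (a : ℕ) (i : Fin r), (V i).1 = a → (V i).2 = n →
      X a n ≤ (∑ j ∈ Finset.univ.filter (fun j : Fin r => a ≤ (V j).1),
                X (V j).1 (V j).2)
            + ∑ j ∈ U.filter (fun j => a ≤ j), X j j := by
    intro a i hia hin
    have hfilt : Finset.univ.filter (fun j : Fin r => a ≤ (V j).1) = {i} := by
      ext j
      simp only [Finset.mem_filter, Finset.mem_univ, true_and, Finset.mem_singleton]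
      constructor
      · intro hj
        by_contra hne
        have hm1 : (V j).1 ∈ Finset.Icc (V j).1 (V j).2 :=
          Finset.mem_Icc.mpr ⟨le_rfl, (hV1 j).2.1⟩
        have hm2 : (V j).1 ∈ Finset.Icc (V i).1 (V i).2 := by
          rw [Finset.mem_Icc, hia, hin]
          exact ⟨hj, le_trans (hV1 j).2.1 (hV1 j).2.2⟩
        exact Finset.disjoint_left.mp (hdisj j i hne) hm1 hm2
      · rintro rfl; omega
    have hfilt2 : U.filter (fun j => a ≤ j) = ∅ := by
      ext j
      simp only [Finset.mem_filter, Finset.notMem_empty, iff_false, not_and]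
      intro hjU hja
      rw [hmemU] at hjU
      refine hjU.2 ((hmemB j).mpr ⟨i, ?_, ?_⟩) <;> omega
    rw [hfilt, hfilt2, Finset.sum_singleton, Finset.sum_empty, hia, hin]
    linarith
  -- terminal uncovered case: a = n not covered
  have uncTerm : ∀ (a : ℕ), a = n → 1 ≤ a → a ∉ B →
      X a n ≤ (∑ j ∈ Finset.univ.filter (fun j : Fin r => a ≤ (V j).1),
                X (V j).1 (V j).2)
            + ∑ j ∈ U.filter (fun j => a ≤ j), X j j := by
    intro a ha h1a haB
    have hfilt : Finset.univ.filter (fun j : Fin r => a ≤ (V j).1) = ∅ := by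
      ext j
      simp only [Finset.mem_filter, Finset.mem_univ, true_and, Finset.notMem_empty,
        iff_false]
      intro hj
      have h2 := (hV1 j).2.2
      have h1 := (hV1 j).2.1
      refine haB ((hmemB a).mpr ⟨j, ?_, ?_⟩) <;> omega
    have hfilt2 : U.filter (fun j => a ≤ j) = {a} := by
      ext j
      simp only [Finset.mem_filter, Finset.mem_singleton]
      constructor
      · rintro ⟨hjU, hja⟩
        rw [hmemU] at hjU
        omega
      · rintro rfl
        exact ⟨(hmemU _).mpr ⟨⟨h1a, by omega⟩, haB⟩, le_rfl⟩
    rw [hfilt, hfilt2, Finset.sum_empty, Finset.sum_singleton, ha]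
    linarith [le_refl (X n n)]
  have key : ∀ d a, n - a ≤ d → 1 ≤ a → a ≤ n →
      (∀ i : Fin r, ¬((V i).1 < a ∧ a ≤ (V i).2)) →
      X a n ≤ (∑ i ∈ Finset.univ.filter (fun i : Fin r => a ≤ (V i).1),
                X (V i).1 (V i).2)
            + ∑ j ∈ U.filter (fun j => a ≤ j), X j j := by
    intro d
    induction d with
    | zero =>
      intro a hda h1a han hstart
      have han' : a = n := by omega
      by_cases hcov : a ∈ B
      · obtain ⟨i, hi1, hi2⟩ := (hmemB a).mp hcov
        have hila : (V i).1 = a := by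
          rcases lt_or_eq_of_le hi1 with h | h
          · exact absurd ⟨h, hi2⟩ (hstart i)
          · omega
        have hend : (V i).2 = n := by
          have := (hV1 i).2.2; omega
        exact covTerm a i hila hend
      · exact uncTerm a han' h1a hcov
    | succ d ih =>
      intro a hda h1a han hstart
      by_cases hcov : a ∈ B
      · obtain ⟨i, hi1, hi2⟩ := (hmemB a).mp hcov
        have hila : (V i).1 = a := by
          rcases lt_or_eq_of_le hi1 with h | h
          · exact absurd ⟨h, hi2⟩ (hstart i)
          · omega
        by_cases hend : (V i).2 = n
        · exact covTerm a i hila hend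
        · set e := (V i).2 with he
          have hen : e < n := lt_of_le_of_ne (hV1 i).2.2 hend
          have hae : a ≤ e := hi2
          have hstep := hsub a e n h1a hae hen
          have hstart' : ∀ j : Fin r, ¬((V j).1 < e + 1 ∧ e + 1 ≤ (V j).2) := by
            intro j ⟨hj1, hj2⟩
            by_cases hji : j = i
            · subst hji; omega
            · have hm1 : e ∈ Finset.Icc (V j).1 (V j).2 := Finset.mem_Icc.mpr ⟨by omega, by omega⟩
              have hm2 : e ∈ Finset.Icc (V i).1 (V i).2 := Finset.mem_Icc.mpr ⟨by omega, le_rfl⟩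
              exact Finset.disjoint_left.mp (hdisj j i hji) hm1 hm2
          have hih := ih (e + 1) (by omega) (by omega) (by omega) hstart'
          have hfilt : Finset.univ.filter (fun j : Fin r => a ≤ (V j).1)
              = insert i (Finset.univ.filter (fun j : Fin r => e + 1 ≤ (V j).1)) := by
            ext j
            simp only [Finset.mem_filter, Finset.mem_univ, true_and, Finset.mem_insert]
            constructor
            · intro hj
              by_cases hji : j = i
              · exact Or.inl hji
              · right
                by_contra hlt
                have hm1 : (V j).1 ∈ Finset.Icc (V j).1 (V j).2 :=
                  Finset.mem_Icc.mpr ⟨le_rfl, (hV1 j).2.1⟩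
                have hm2 : (V j).1 ∈ Finset.Icc (V i).1 (V i).2 :=
                  Finset.mem_Icc.mpr ⟨by omega, by omega⟩
                exact Finset.disjoint_left.mp (hdisj j i hji) hm1 hm2
            · rintro (rfl | hj)
              · omega
              · omega
          have hnotmem : i ∉ Finset.univ.filter (fun j : Fin r => e + 1 ≤ (V j).1) := by
            simp only [Finset.mem_filter, Finset.mem_univ, true_and]
            omega
          have hfilt2 : U.filter (fun j => a ≤ j) = U.filter (fun j => e + 1 ≤ j) := by
            ext j
            simp only [Finset.mem_filter]
            constructor
            · rintro ⟨hjU, hja⟩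
              refine ⟨hjU, ?_⟩
              by_contra hle
              rw [hmemU] at hjU
              refine hjU.2 ((hmemB j).mpr ⟨i, ?_, ?_⟩) <;> omega
            · rintro ⟨hjU, hje⟩
              exact ⟨hjU, by omega⟩
          rw [hfilt, Finset.sum_insert hnotmem, hfilt2]
          have := hXle i
          calc X a n ≤ X a e + X (e + 1) n := hstep
            _ ≤ X a e + ((∑ j ∈ Finset.univ.filter (fun j : Fin r => e + 1 ≤ (V j).1),
                  X (V j).1 (V j).2) + ∑ j ∈ U.filter (fun j => e + 1 ≤ j), X j j) := by
                linarith
            _ = X (V i).1 (V i).2 + (∑ j ∈ Finset.univ.filter (fun j : Fin r => e + 1 ≤ (V j).1),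
                  X (V j).1 (V j).2) + ∑ j ∈ U.filter (fun j => e + 1 ≤ j), X j j := by
                rw [hila, ← he]; ring
      · by_cases han' : a = n
        · exact uncTerm a han' h1a hcov
        · have hstep := hsub a a n h1a le_rfl (by omega)
          have hstart' : ∀ j : Fin r, ¬((V j).1 < a + 1 ∧ a + 1 ≤ (V j).2) := by
            intro j ⟨hj1, hj2⟩
            refine hcov ((hmemB a).mpr ⟨j, ?_, ?_⟩) <;> omega
          have hih := ih (a + 1) (by omega) (by omega) (by omega) hstart'
          have hfilt : Finset.univ.filter (fun j : Fin r => a ≤ (V j).1)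
              = Finset.univ.filter (fun j : Fin r => a + 1 ≤ (V j).1) := by
            ext j
            simp only [Finset.mem_filter, Finset.mem_univ, true_and]
            constructor
            · intro hj
              rcases lt_or_eq_of_le hj with h | h
              · omega
              · exfalso
                have h1 := (hV1 j).2.1
                refine hcov ((hmemB a).mpr ⟨j, ?_, ?_⟩) <;> omega
            · omega
          have hfilt2 : U.filter (fun j => a ≤ j)
              = insert a (U.filter (fun j => a + 1 ≤ j)) := by
            ext j
            simp only [Finset.mem_filter, Finset.mem_insert]
            constructor
            · rintro ⟨hjU, hja⟩
              by_cases hja' : j = a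
              · exact Or.inl hja'
              · exact Or.inr ⟨hjU, by omega⟩
            · rintro (rfl | ⟨hjU, hja⟩)
              · exact ⟨(hmemU j).mpr ⟨⟨h1a, by omega⟩, hcov⟩, le_rfl⟩
              · exact ⟨hjU, by omega⟩
          have hnotmem : a ∉ U.filter (fun j => a + 1 ≤ j) := by
            simp only [Finset.mem_filter]
            omega
          rw [hfilt, hfilt2, Finset.sum_insert hnotmem]
          linarith
  -- apply at a = 1
  have hstart1 : ∀ i : Fin r, ¬((V i).1 < 1 ∧ 1 ≤ (V i).2) := by
    intro i ⟨h1, _⟩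
    have := (hV1 i).1; omega
  have hmain := key n 1 (by omega) le_rfl hn hstart1
  have hfiltA : Finset.univ.filter (fun i : Fin r => 1 ≤ (V i).1) = Finset.univ := by
    apply Finset.filter_true_of_mem
    intro i _
    exact (hV1 i).1
  have hfiltB : U.filter (fun j => 1 ≤ j) = U := by
    apply Finset.filter_true_of_mem
    intro j hj
    exact ((hmemU j).mp hj).1.1
  rw [hfiltA, hfiltB] at hmain
  -- bound the sums
  have hUsum : ∑ j ∈ U, X j j ≤ M * (U.card : ℝ) := by
    calc ∑ j ∈ U, X j j ≤ ∑ _j ∈ U, M :=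
          Finset.sum_le_sum fun j hj => hdiag j ((hmemU j).mp hj).1.1
      _ = M * (U.card : ℝ) := by rw [Finset.sum_const, nsmul_eq_mul, mul_comm]
  have hcardB : (B.card : ℝ) = ∑ i : Fin r, (((V i).2 : ℝ) - (V i).1 + 1) := by
    rw [hBdef, Finset.card_biUnion (fun i _ j _ hij => hdisj i j hij)]
    push_cast
    apply Finset.sum_congr rfl
    intro i _
    rw [Nat.card_Icc]
    have h1 := (hV1 i).1
    have h2 := (hV1 i).2.1
    rw [Nat.cast_sub (by omega : (V i).1 ≤ (V i).2 + 1)]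
    push_cast
    ring
  have hVsum : ∑ i : Fin r, X (V i).1 (V i).2 ≤ s * (B.card : ℝ) := by
    rw [hcardB, Finset.mul_sum]
    exact Finset.sum_le_sum fun i _ => hXle i
  have hBsub : B ⊆ Finset.Icc 1 n := by
    intro x hx
    obtain ⟨i, h1, h2⟩ := (hmemB x).mp hx
    have := hV1 i
    rw [Finset.mem_Icc]
    omega
  have hcardUB : U.card + B.card = n := by
    rw [hUdef, Finset.card_sdiff_of_subset hBsub]
    have hle : B.card ≤ (Finset.Icc 1 n).card := Finset.card_le_card hBsub
    rw [Nat.card_Icc] at *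
    omega
  have hcardUBr : (U.card : ℝ) + (B.card : ℝ) = n := by exact_mod_cast hcardUB
  have hnpos : (0:ℝ) < n := by exact_mod_cast hn
  have htn : t * n < X 1 n := by
    rw [lt_div_iff₀ hnpos] at hS
    exact hS
  have hMs : (0:ℝ) < M - s := by linarith
  have hcard' : (M - s) * (U.card : ℝ) ≤ (t - s) * n := by
    have h := mul_le_mul_of_nonneg_left hcard (le_of_lt hMs)
    calc (M - s) * (U.card : ℝ) ≤ (M - s) * ((t - s) / (M - s) * n) := h
      _ = (t - s) * n := by
          field_simp
  have e1 : s * (B.card : ℝ) = s * (n : ℝ) - s * (U.card : ℝ) := by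
    have : (B.card : ℝ) = (n : ℝ) - (U.card : ℝ) := by linarith
    rw [this]; ring
  have e2 : (M - s) * (U.card : ℝ) = M * (U.card : ℝ) - s * (U.card : ℝ) := by ring
  have e3 : (t - s) * (n : ℝ) = t * (n : ℝ) - s * (n : ℝ) := by ring
  linarith [hmain, hVsum, hUsum, hcard', htn]
end
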